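/- Let K be a propositional base. For every Maximal Consistency Relation ∼ of K and every variable p occurring in K, the number of equivalence classes of Occ(K)/∼ that contain occurrences of p is at most two. -/
import Mathlib


namespace Occ

/-- Propositional formulas over variables indexed by `ℕ`,
built from variables using negation and conjunction. -/
inductive Form : Type where
  | var : ℕ → Form
  | neg : Form → Form
  | conj : Form → Form → Form
deriving DecidableEq

/-- Boolean evaluation of a formula under an interpretation `w`. -/
def eval (w : ℕ → Bool) : Form → Bool
  | .var p => w p
  | .neg φ => !(eval w φ)
  | .conj φ ψ => eval w φ && eval w ψ

/-- The variables occurring in a formula. -/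
def vars : Form → Finset ℕ
  | .var p => {p}
  | .neg φ => vars φ
  | .conj φ ψ => vars φ ∪ vars ψ

/-- A step in a path addressing a subformula occurrence. -/
inductive Step : Type where
  | neg | left | right
deriving DecidableEq

/-- `occAt φ l pol = some (p, pol')` iff the path `l` addresses an occurrence of the
variable `p` in `φ`, and this occurrence has polarity `pol'` (`true` = positive)
when the ambient polarity of `φ` is `pol`. -/
def occAt : Form → List Step → Bool → Option (ℕ × Bool)
  | .var p, [], pol => some (p, pol)
  | .neg φ, .neg :: l, pol => occAt φ l (!pol)
  | .conj φ _, .left :: l, pol => occAt φ l pol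
  | .conj _ ψ, .right :: l, pol => occAt ψ l pol
  | _, _, _ => none

/-- A variable occurrence in a base: a formula together with a path into it. -/
abbrev Occurrence : Type := Form × List Step

/-- A propositional base: a finite set of formulas. -/
abbrev PB : Type := Finset Form

/-- `o` is a variable occurrence in the base `K`. -/
def IsOcc (K : PB) (o : Occurrence) : Prop :=
  o.1 ∈ K ∧ ∃ p pol, occAt o.1 o.2 true = some (p, pol)

/-- `o` is an occurrence of the variable `p` in `K`, of polarity `pol`. -/
def IsOccOf (K : PB) (o : Occurrence) (p : ℕ) (pol : Bool) : Prop :=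
  o.1 ∈ K ∧ occAt o.1 o.2 true = some (p, pol)

/-- `o` is an occurrence of the variable `p` in `K`. -/
def IsOccVar (K : PB) (o : Occurrence) (p : ℕ) : Prop :=
  ∃ pol, IsOccOf K o p pol

/-- `o` is a positive variable occurrence in `K`. -/
def IsPosOcc (K : PB) (o : Occurrence) : Prop := ∃ p, IsOccOf K o p true

/-- `o` is a negative variable occurrence in `K`. -/
def IsNegOcc (K : PB) (o : Occurrence) : Prop := ∃ p, IsOccOf K o p false

/-- `o` and `o'` are occurrences of the same variable. -/
def sameVar (o o' : Occurrence) : Prop :=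
  ∃ p pol pol', occAt o.1 o.2 true = some (p, pol) ∧ occAt o'.1 o'.2 true = some (p, pol')

/-- The variables occurring in a base. -/
def varsPB (K : PB) : Finset ℕ := K.sup vars

/-- `w` is a (Boolean) model of the base `K` (i.e. of the conjunction of its formulas). -/
def modelsPB (w : ℕ → Bool) (K : PB) : Prop := ∀ φ ∈ K, eval w φ = true

/-- A base is consistent iff the conjunction of its formulas has a model. -/
def ConsistentPB (K : PB) : Prop := ∃ w, modelsPB w K

/-- Classical entailment from a base. -/
def Entails (K : PB) (φ : Form) : Prop := ∀ w, modelsPB w K → eval w φ = true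

/-- Rename every variable occurrence of a formula, the new variable of the
occurrence at path `l` being `f l`. -/
def renameBy : (List Step → ℕ) → Form → Form
  | f, .var _ => .var (f [])
  | f, .neg φ => .neg (renameBy (fun l => f (.neg :: l)) φ)
  | f, .conj φ ψ =>
      .conj (renameBy (fun l => f (.left :: l)) φ) (renameBy (fun l => f (.right :: l)) ψ)

/-- The formula `φ` (viewed as a member of a base) with each occurrence `o`
replaced by the variable `R o`. -/
def renameForm (R : Occurrence → ℕ) (φ : Form) : Form :=
  renameBy (fun l => R (φ, l)) φ

/-- A C-renaming of `K`: it assigns a pairwise distinct fresh variable to each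
occurrence of `K`. -/
structure IsCRenaming (K : PB) (R : Occurrence → ℕ) : Prop where
  fresh : ∀ o, IsOcc K o → R o ∉ varsPB K
  inj : ∀ o o', IsOcc K o → IsOcc K o' → R o = R o' → o = o'

/-- Binary relations on occurrences, viewed as sets of ordered pairs. -/
abbrev Rel : Type := Set (Occurrence × Occurrence)

/-- `r` is an equivalence relation on `Occ(K)`. -/
structure IsEquivOn (K : PB) (r : Rel) : Prop where
  dom : ∀ q ∈ r, IsOcc K q.1 ∧ IsOcc K q.2
  refl : ∀ o, IsOcc K o → (o, o) ∈ r
  symm : ∀ q ∈ r, (q.2, q.1) ∈ r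
  trans : ∀ a b c : Occurrence, (a, b) ∈ r → (b, c) ∈ r → (a, c) ∈ r

/-- Compliance: related occurrences are occurrences of the same variable. -/
def Compliant (r : Rel) : Prop := ∀ q ∈ r, sameVar q.1 q.2

/-- Consistency of the formula `⋀R(K) ∧ ⋀_{(o,o')∈r} (R(o) ↔ R(o'))`. -/
def RelConsistent (K : PB) (R : Occurrence → ℕ) (r : Rel) : Prop :=
  ∃ w : ℕ → Bool, (∀ φ ∈ K, eval w (renameForm R φ) = true) ∧
    ∀ q ∈ r, w (R q.1) = w (R q.2)

/-- Minimal Inconsistency Relation of `K` (w.r.t. the C-renaming `R`). -/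
def IsMIR (K : PB) (R : Occurrence → ℕ) (r : Rel) : Prop :=
  IsEquivOn K r ∧ Compliant r ∧ ¬ RelConsistent K R r ∧
    ∀ r', IsEquivOn K r' → Compliant r' → ¬ RelConsistent K R r' → ¬ r' ⊂ r

/-- Maximal Consistency Relation of `K` (w.r.t. the C-renaming `R`). -/
def IsMCR (K : PB) (R : Occurrence → ℕ) (r : Rel) : Prop :=
  IsEquivOn K r ∧ Compliant r ∧ RelConsistent K R r ∧
    ∀ r', IsEquivOn K r' → Compliant r' → RelConsistent K R r' → ¬ r ⊂ r'

/-- The relation `∼_c^K`: relating occurrences of `K` of the same variable. -/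
def sameVarRel (K : PB) : Rel :=
  {q | IsOcc K q.1 ∧ IsOcc K q.2 ∧ sameVar q.1 q.2}

/-- `PN(r)`: related pairs consisting of a positive and a negative occurrence. -/
def PN (K : PB) (r : Rel) : Rel :=
  {q | q ∈ r ∧ IsPosOcc K q.1 ∧ IsNegOcc K q.2}

/-- A BMCR: an MCR satisfying Maximality-2. -/
def IsBMCR (K : PB) (R : Occurrence → ℕ) (r : Rel) : Prop :=
  IsMCR K R r ∧
    ∀ r', IsEquivOn K r' → Compliant r' → RelConsistent K R r' → ¬ PN K r ⊂ PN K r'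

/-- `H` is a hitting set of the collection `S`. -/
def IsHittingSet {α : Type} (S : Set (Set α)) (H : Set α) : Prop :=
  ∀ s ∈ S, (s ∩ H).Nonempty

/-- `H` is a minimal hitting set of the collection `S`. -/
def IsMinHittingSet {α : Type} (S : Set (Set α)) (H : Set α) : Prop :=
  IsHittingSet S H ∧ ∀ H', H' ⊂ H → ¬ IsHittingSet S H'

/-- `r` is `H`-maximal (for an equivalence relation `r ⊆ ∼_c^K`). -/
def IsHMaximal (K : PB) (H r : Rel) : Prop :=
  r ∩ H = ∅ ∧
    ∀ r', IsEquivOn K r' → r' ⊆ sameVarRel K → r ⊂ r' → (r' ∩ H).Nonempty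

/-- `r` is `H`-minimal (for an equivalence relation `r ⊆ ∼_c^K`). -/
def IsHMinimal (K : PB) (H r : Rel) : Prop :=
  H ⊆ r ∧ ∀ r', IsEquivOn K r' → r' ⊂ r → ¬ H ⊆ r'

/-- The set of all MIRs of `K`. -/
def MIRs (K : PB) (R : Occurrence → ℕ) : Set Rel := {r | IsMIR K R r}

/-- The set of all C-MCRs of `K`: relations `θ ⊆ ∼_c^K` with `∼_c^K ∖ θ` an MCR. -/
def CMCRs (K : PB) (R : Occurrence → ℕ) : Set Rel :=
  {θ | θ ⊆ sameVarRel K ∧ IsMCR K R (sameVarRel K \ θ)}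

/-- `ρ` is a `∼`-renaming for the equivalence relation `r` on `Occ(K)`:
it assigns a distinct variable to each equivalence class (so it is constant on
classes and distinguishes distinct classes), and any class containing all the
occurrences of a variable `p` is mapped to `p` itself. -/
def IsClassRenaming (K : PB) (r : Rel) (ρ : Occurrence → ℕ) : Prop :=
  (∀ o o', IsOcc K o → IsOcc K o' → (ρ o = ρ o' ↔ (o, o') ∈ r)) ∧
    (∀ o p, IsOccVar K o p → (∀ o', IsOccVar K o' p → (o, o') ∈ r) → ρ o = p)

/-- `σ` encodes a tuple `(q₁,…,q_m) ∈ P(ρ_∼, S)` where `S = (p₁,…,p_m)`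
enumerates `var(K) ∩ var(φ)`: it maps each shared variable `p` to a member of
`⌈ρ⌉(p)` and is the identity elsewhere. -/
def IsTupleChoice (K : PB) (φ : Form) (ρ : Occurrence → ℕ) (σ : ℕ → ℕ) : Prop :=
  (∀ p, p ∈ varsPB K → p ∈ vars φ → ∃ o, IsOccVar K o p ∧ σ p = ρ o) ∧
    (∀ p, ¬ (p ∈ varsPB K ∧ p ∈ vars φ) → σ p = p)

/-- Simultaneous substitution of variables by variables. -/
def substV (σ : ℕ → ℕ) : Form → Form
  | .var p => .var (σ p)
  | .neg φ => .neg (substV σ φ)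
  | .conj φ ψ => .conj (substV σ φ) (substV σ ψ)

/-- `ρ_∼(K) ⊢ ψ`. -/
def rhoEntails (K : PB) (ρ : Occurrence → ℕ) (ψ : Form) : Prop :=
  ∀ w : ℕ → Bool, (∀ φ ∈ K, eval w (renameForm ρ φ) = true) → eval w ψ = true

/-- The inference relation `K ⊩₁ φ`. -/
def Inf1 (K : PB) (R : Occurrence → ℕ) (φ : Form) : Prop :=
  ∀ r ρ, IsMCR K R r → IsClassRenaming K r ρ →
    ∃ σ, IsTupleChoice K φ ρ σ ∧ rhoEntails K ρ (substV σ φ)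

/-- The inference relation `K ⊩₂ φ`. -/
def Inf2 (K : PB) (R : Occurrence → ℕ) (φ : Form) : Prop :=
  ∀ r ρ, IsMCR K R r → IsClassRenaming K r ρ →
    ∀ σ, IsTupleChoice K φ ρ σ → rhoEntails K ρ (substV σ φ)

/-- The inference relation `K ⊩₁^B φ`. -/
def Inf1B (K : PB) (R : Occurrence → ℕ) (φ : Form) : Prop :=
  ∀ r ρ, IsBMCR K R r → IsClassRenaming K r ρ →
    ∃ σ, IsTupleChoice K φ ρ σ ∧ rhoEntails K ρ (substV σ φ)

/-- The inference relation `K ⊩₂^B φ`. -/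
def Inf2B (K : PB) (R : Occurrence → ℕ) (φ : Form) : Prop :=
  ∀ r ρ, IsBMCR K R r → IsClassRenaming K r ρ →
    ∀ σ, IsTupleChoice K φ ρ σ → rhoEntails K ρ (substV σ φ)

/-- `μ` is an o-model of `K`: any interpretation `w` with `w (R o) = μ o` for all
occurrences `o` of `K` is a model of `⋀R(K)`. -/
def OModel (K : PB) (R : Occurrence → ℕ) (μ : Occurrence → Bool) : Prop :=
  ∀ w : ℕ → Bool, (∀ o, IsOcc K o → w (R o) = μ o) →
    ∀ φ ∈ K, eval w (renameForm R φ) = true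

/-- `diff_a(μ)`: pairs of occurrences of the same variable on which `μ` differs. -/
def diffA (K : PB) (μ : Occurrence → Bool) : Rel :=
  {q | IsOcc K q.1 ∧ IsOcc K q.2 ∧ sameVar q.1 q.2 ∧ μ q.1 ≠ μ q.2}

/-- `μ` is an a-minimal o-model of `K`. -/
def AMinOModel (K : PB) (R : Occurrence → ℕ) (μ : Occurrence → Bool) : Prop :=
  OModel K R μ ∧ ∀ μ', OModel K R μ' → ¬ diffA K μ' ⊂ diffA K μ

/-- A Boolean interpretation `w` is compatible with an o-interpretation `μ`. -/
def Compatible (K : PB) (μ : Occurrence → Bool) (w : ℕ → Bool) : Prop :=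
  ∀ p ∈ varsPB K, ∃ o, IsOccVar K o p ∧ w p = μ o

/-- The inference relation `K ⊩_{a1} φ`. -/
def InfA1 (K : PB) (R : Occurrence → ℕ) (φ : Form) : Prop :=
  ∀ μ, AMinOModel K R μ → ∃ w, Compatible K μ w ∧ eval w φ = true

/-- The inference relation `K ⊩_{a2} φ`. -/
def InfA2 (K : PB) (R : Occurrence → ℕ) (φ : Form) : Prop :=
  ∀ μ, AMinOModel K R μ → ∀ w, Compatible K μ w → eval w φ = true

/-- LP_m evaluation: an LP_m interpretation assigns a (nonempty) set of truth
values to each variable; it extends to formulas pointwise. -/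
def lpEval (lam : ℕ → Set Bool) : Form → Set Bool
  | .var p => lam p
  | .neg φ => (fun v => !v) '' lpEval lam φ
  | .conj φ ψ => Set.image2 (· && ·) (lpEval lam φ) (lpEval lam ψ)

/-- `lam` is an LP_m interpretation: each variable gets a nonempty set of values. -/
def IsLPInterp (lam : ℕ → Set Bool) : Prop := ∀ p, (lam p).Nonempty

/-- `lam` is an LP_m model of `⋀K`. -/
def LPModelPB (lam : ℕ → Set Bool) (K : PB) : Prop := ∀ φ ∈ K, true ∈ lpEval lam φ

/-- `λ! = {p : λ(p) = {0,1}}`. -/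
def lpBang (lam : ℕ → Set Bool) : Set ℕ := {p | lam p = Set.univ}

/-- `lam` is a minimal LP_m model of `⋀K`. -/
def MinLPModelPB (K : PB) (lam : ℕ → Set Bool) : Prop :=
  IsLPInterp lam ∧ LPModelPB lam K ∧
    ∀ lam', IsLPInterp lam' → LPModelPB lam' K → ¬ lpBang lam' ⊂ lpBang lam

/-- `K ⊢_{LPm} φ`. -/
def LPmEntails (K : PB) (φ : Form) : Prop :=
  ∀ lam, MinLPModelPB K lam → true ∈ lpEval lam φ

/-- Replace the subformula occurrence of `φ` addressed by the path `l` by `ψ`. -/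
def replaceAt : Form → List Step → Form → Form
  | _, [], ψ => ψ
  | .neg φ, .neg :: l, ψ => .neg (replaceAt φ l ψ)
  | .conj φ χ, .left :: l, ψ => .conj (replaceAt φ l ψ) χ
  | .conj φ χ, .right :: l, ψ => .conj φ (replaceAt χ l ψ)
  | φ, _, _ => φ

/-- The equivalence relation `∼_λ` induced on `Occ(K)` by an LP_m interpretation:
its classes are `Occ(p,K)` for `|λ(p)| = 1` and `PosOcc(p,K)`, `NegOcc(p,K)` for
`λ(p) = {0,1}`. -/
def lamRel (K : PB) (lam : ℕ → Set Bool) : Rel :=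
  {q | ∃ p pol pol', IsOccOf K q.1 p pol ∧ IsOccOf K q.2 p pol' ∧
    (lam p = Set.univ → pol = pol')}

open scoped Classical in
/-- The o-interpretation `μ_λ^K` associated with an LP_m interpretation `λ`. -/
noncomputable def muOf (lam : ℕ → Set Bool) (o : Occurrence) : Bool :=
  match occAt o.1 o.2 true with
  | some (p, pol) =>
      if lam p = ({false} : Set Bool) then false
      else if lam p = ({true} : Set Bool) then true
      else pol
  | none => false

end Occ
open Occ in
/-- Key lemma: if `r` is an MCR witnessed consistent by `w`, then any two occurrences of
the same variable `p` on which `w ∘ R` agrees are related by `r`. -/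
lemma aux_rel_of_eq (K : Occ.PB) (R : Occ.Occurrence → ℕ) (r : Occ.Rel)
    (hr : Occ.IsMCR K R r) (w : ℕ → Bool)
    (hw1 : ∀ φ ∈ K, Occ.eval w (Occ.renameForm R φ) = true)
    (hw2 : ∀ q ∈ r, w (R q.1) = w (R q.2)) (p : ℕ) (o o' : Occ.Occurrence)
    (ho : Occ.IsOccVar K o p) (ho' : Occ.IsOccVar K o' p)
    (hww : w (R o) = w (R o')) : (o, o') ∈ r := by
  obtain ⟨heq, hcomp, -, hmax⟩ := hr
  obtain ⟨pol, hoK, hocc⟩ := ho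
  obtain ⟨pol', hoK', hocc'⟩ := ho'
  have hOo : Occ.IsOcc K o := ⟨hoK, p, pol, hocc⟩
  have hOo' : Occ.IsOcc K o' := ⟨hoK', p, pol', hocc'⟩
  set S : Set Occ.Occurrence := {a | (a, o) ∈ r ∨ (a, o') ∈ r} with hS
  set r' : Occ.Rel := r ∪ {q | q.1 ∈ S ∧ q.2 ∈ S} with hr'
  -- members of S are occurrences of p
  have hSocc : ∀ a ∈ S, ∃ pa, Occ.IsOccOf K a p pa := by
    rintro a (h | h)
    · obtain ⟨q, p1, p2, ha, hb⟩ := hcomp _ h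
      rw [hocc] at hb; obtain ⟨rfl, rfl⟩ := Prod.mk.injEq .. ▸ Option.some.inj hb
      exact ⟨p1, (heq.dom _ h).1.1, ha⟩
    · obtain ⟨q, p1, p2, ha, hb⟩ := hcomp _ h
      rw [hocc'] at hb; obtain ⟨rfl, rfl⟩ := Prod.mk.injEq .. ▸ Option.some.inj hb
      exact ⟨p1, (heq.dom _ h).1.1, ha⟩
  have hSw : ∀ a ∈ S, w (R a) = w (R o) := by
    rintro a (h | h)
    · exact hw2 _ h
    · exact (hw2 _ h).trans hww.symm
  have hoS : o ∈ S := Or.inl (heq.refl o hOo)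
  have hoS' : o' ∈ S := Or.inr (heq.refl o' hOo')
  have hEq' : Occ.IsEquivOn K r' := by
    constructor
    · rintro q (h | ⟨h1, h2⟩)
      · exact heq.dom _ h
      · obtain ⟨p1, h1', h1''⟩ := hSocc _ h1
        obtain ⟨p2, h2', h2''⟩ := hSocc _ h2
        exact ⟨⟨h1', p, p1, h1''⟩, ⟨h2', p, p2, h2''⟩⟩
    · exact fun a ha => Or.inl (heq.refl a ha)
    · rintro q (h | ⟨h1, h2⟩)
      · exact Or.inl (heq.symm _ h)
      · exact Or.inr ⟨h2, h1⟩
    · rintro a b c (hab | ⟨ha, hb⟩) (hbc | ⟨hb', hc⟩)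
      · exact Or.inl (heq.trans _ _ _ hab hbc)
      · refine Or.inr ⟨?_, hc⟩
        rcases hb' with h | h
        · exact Or.inl (heq.trans _ _ _ hab h)
        · exact Or.inr (heq.trans _ _ _ hab h)
      · refine Or.inr ⟨ha, ?_⟩
        have hcb := heq.symm _ hbc
        rcases hb with h | h
        · exact Or.inl (heq.trans _ _ _ hcb h)
        · exact Or.inr (heq.trans _ _ _ hcb h)
      · exact Or.inr ⟨ha, hc⟩
  have hComp' : Occ.Compliant r' := by
    rintro q (h | ⟨h1, h2⟩)
    · exact hcomp _ h
    · obtain ⟨p1, -, h1''⟩ := hSocc _ h1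
      obtain ⟨p2, -, h2''⟩ := hSocc _ h2
      exact ⟨p, p1, p2, h1'', h2''⟩
  have hCons' : Occ.RelConsistent K R r' := by
    refine ⟨w, hw1, ?_⟩
    rintro q (h | ⟨h1, h2⟩)
    · exact hw2 _ h
    · exact (hSw _ h1).trans (hSw _ h2).symm
  have hsub : r ⊆ r' := fun q h => Or.inl h
  have := hmax r' hEq' hComp' hCons'
  have hr'r : r' ⊆ r := by
    by_contra hcon
    exact this ⟨hsub, fun h => hcon h⟩
  exact hr'r (Or.inr ⟨hoS, hoS'⟩)

/-- Proposition 6: for every MCR `r` of `K` and every variable `p`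
occurring in `K`, at most two equivalence classes of `r` contain occurrences of `p`. -/
theorem MCR_at_most_two_classes (K : Occ.PB)
    (R : Occ.Occurrence → ℕ) (hR : Occ.IsCRenaming K R)
    (r : Occ.Rel) (hr : Occ.IsMCR K R r) (p : ℕ) (hp : p ∈ Occ.varsPB K) :
    Set.encard {C : Set Occ.Occurrence |
      ∃ o, Occ.IsOccVar K o p ∧ C = {o' | (o, o') ∈ r}} ≤ 2 := by
  classical
  obtain ⟨w, hw1, hw2⟩ := hr.2.2.1
  -- any two occurrences of p with equal w-value determine the same class
  have key : ∀ o o', Occ.IsOccVar K o p → Occ.IsOccVar K o' p →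
      w (R o) = w (R o') → {o'' | (o, o'') ∈ r} = {o'' | (o', o'') ∈ r} := by
    intro o o' ho ho' hww
    have hrel : (o, o') ∈ r := aux_rel_of_eq K R r hr w hw1 hw2 p o o' ho ho' hww
    ext a
    exact ⟨fun h => hr.1.trans _ _ _ (hr.1.symm _ hrel) h,
      fun h => hr.1.trans _ _ _ hrel h⟩
  set A : Set Occ.Occurrence :=
    if h : ∃ o, Occ.IsOccVar K o p ∧ w (R o) = true then {o' | (h.choose, o') ∈ r}
    else ∅ with hA
  set B : Set Occ.Occurrence :=
    if h : ∃ o, Occ.IsOccVar K o p ∧ w (R o) = false then {o' | (h.choose, o') ∈ r}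
    else ∅ with hB
  have hsub : {C : Set Occ.Occurrence |
      ∃ o, Occ.IsOccVar K o p ∧ C = {o' | (o, o') ∈ r}} ⊆ {A, B} := by
    rintro C ⟨o, ho, rfl⟩
    cases hwo : w (R o) with
    | true =>
        left
        have hex : ∃ o, Occ.IsOccVar K o p ∧ w (R o) = true := ⟨o, ho, hwo⟩
        rw [hA, dif_pos hex]
        exact key o hex.choose ho hex.choose_spec.1 (hwo.trans hex.choose_spec.2.symm)
    | false =>
        right
        have hex : ∃ o, Occ.IsOccVar K o p ∧ w (R o) = false := ⟨o, ho, hwo⟩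
        rw [hB, dif_pos hex]
        exact Set.mem_singleton_iff.mpr
          (key o hex.choose ho hex.choose_spec.1 (hwo.trans hex.choose_spec.2.symm))
  calc Set.encard {C : Set Occ.Occurrence |
      ∃ o, Occ.IsOccVar K o p ∧ C = {o' | (o, o') ∈ r}}
      ≤ Set.encard {A, B} := Set.encard_le_encard hsub
    _ ≤ Set.encard {B} + 1 := Set.encard_insert_le _ _
    _ = 2 := by rw [Set.encard_singleton]; rfl
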